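/- arXiv:1506.07817 — 2 statements merged into one kernel-verified Lean document; each statement's English description precedes it below -/
import Mathlib

section
/- Let n be a composite number and let Z_n be the cyclic group of order n. Set θ = arccos( (2n^3 + 27φ(n)^2 + 27φ(n)) / (2√((n^2 + 9φ(n))^3)) ), where φ is Euler's totient function; then 0 < θ < π/2, and the multiset of roots of the characteristic polynomial of the distance matrix of the strong power graph P_s(Z_n) consists of -1 with multiplicity n-3 together with the three pairwise distinct simple roots (n - 3 + 2cos(θ/3)·√(n^2 + 9φ(n)))/3, (n - 3 + 2cos((θ+2π)/3)·√(n^2 + 9φ(n)))/3, and (n - 3 + 2cos((θ-2π)/3)·√(n^2 + 9φ(n)))/3. -/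
/-!
In `ZMod n` two distinct vertices of the strong power graph are adjacent unless one of them is `0`
and the other a unit; for composite `n` a nonzero non-unit is a common neighbour of such a pair.
Hence `D = J - I + e₀ uᵀ + u e₀ᵀ`, where `e₀` and `u` are the indicator vectors of `0` and of the
units, so `D + I = U V` has rank at most three and `χ_D(x) = (x + 1)ⁿ⁻³ χ_{VU}(x + 1)` with `V U`
an explicit `3 × 3` matrix in `n` and `φ(n)`. The remaining cubic is solved by Viète's
trigonometric formula; its three roots are real and distinct because `φ(n) ≤ n - 2` makes the
discriminant positive.
-/

/-- The strong power graph of the cyclic group `ZMod n` (written additively):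
two distinct vertices `x` and `y` are adjacent iff `a • x = b • y` for some
positive integers `a, b < n`. -/
def strongPowerGraphZ (n : ℕ) : SimpleGraph (ZMod n) where
  Adj x y := x ≠ y ∧ ∃ a b : ℕ, 0 < a ∧ a < n ∧ 0 < b ∧ b < n ∧ a • x = b • y
  symm := by
    constructor
    rintro x y ⟨h, a, b, ha, ha', hb, hb', hab⟩
    exact ⟨h.symm, b, a, hb, hb', ha, ha', hab.symm⟩
  loopless := by
    constructor
    rintro x ⟨h, -⟩
    exact h rfl

/-- The distance matrix (with real entries) of the strong power graph of `ZMod n`. -/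
noncomputable def distMatrixZ (n : ℕ) [NeZero n] : Matrix (ZMod n) (ZMod n) ℝ :=
  Matrix.of fun i j => ((strongPowerGraphZ n).dist i j : ℝ)

open Classical in
/-- The adjacency matrix (with real entries) of the strong power graph of `ZMod n`. -/
noncomputable def adjMatrixZ (n : ℕ) [NeZero n] : Matrix (ZMod n) (ZMod n) ℝ :=
  Matrix.of fun i j => if (strongPowerGraphZ n).Adj i j then 1 else 0

namespace ZMod

variable {n : ℕ}

lemma exists_ne_zero_not_isUnit (hn : n ≠ 1) (hnp : ¬ n.Prime) :
    ∃ c : ZMod n, c ≠ 0 ∧ ¬ IsUnit c := by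
  have hp := Nat.minFac_prime hn
  refine ⟨n.minFac, fun h => hnp ?_,
    (isUnit_prime_iff_not_dvd hp).not.mpr (not_not.mpr n.minFac_dvd)⟩
  rw [natCast_eq_zero_iff] at h
  exact Nat.dvd_antisymm (Nat.minFac_dvd n) h ▸ hp

lemma nsmul_ne_zero_of_isUnit {x : ZMod n} (hx : IsUnit x) {b : ℕ} (hb : 0 < b) (hbn : b < n) :
    b • x ≠ 0 := by
  rw [nsmul_eq_mul, ne_eq, hx.mul_left_eq_zero, natCast_eq_zero_iff]
  exact fun h => (Nat.le_of_dvd hb h).not_gt hbn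

variable [NeZero n]

lemma exists_nsmul_eq_zero_of_not_isUnit {y : ZMod n} (hy : ¬ IsUnit y) :
    ∃ b : ℕ, 0 < b ∧ b < n ∧ b • y = 0 := by
  refine ⟨addOrderOf y, addOrderOf_pos y, ?_, addOrderOf_nsmul_eq_zero y⟩
  rw [← natCast_zmod_val y, addOrderOf_coe _ (NeZero.ne n)]
  refine (Nat.div_le_self _ _).lt_of_ne fun h => hy ?_
  rw [← natCast_zmod_val y, isUnit_iff_coprime, Nat.coprime_comm]
  exact (Nat.div_eq_self.mp h).resolve_left (NeZero.ne n)

lemma exists_nsmul_eq_of_isUnit {x y : ZMod n} (hx : IsUnit x) (hy : y ≠ 0) :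
    ∃ a : ℕ, 0 < a ∧ a < n ∧ a • x = y := by
  refine ⟨(y * ↑hx.unit⁻¹).val, val_pos.mpr ?_, val_lt _, ?_⟩
  · simpa using hy
  · rw [nsmul_eq_mul, natCast_zmod_val, mul_assoc, hx.val_inv_mul, mul_one]

lemma card_filter_isUnit :
    (Finset.univ.filter fun z : ZMod n => IsUnit z).card = n.totient := by
  have : Finset.univ.filter (fun z : ZMod n => IsUnit z) =
      Finset.univ.map ⟨Units.val, Units.val_injective⟩ := by
    ext z; simp only [Finset.mem_filter, Finset.mem_univ, true_and, Finset.mem_map,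
      Function.Embedding.coeFn_mk]; rfl
  rw [this, Finset.card_map, Finset.card_univ, card_units_eq_totient]

end ZMod

namespace strongPowerGraphZ

variable {n : ℕ}

lemma not_adj_zero_of_isUnit {y : ZMod n} (hy : IsUnit y) : ¬ (strongPowerGraphZ n).Adj 0 y := by
  rintro ⟨-, a, b, -, -, hb, hbn, hab⟩
  exact ZMod.nsmul_ne_zero_of_isUnit hy hb hbn (by rw [← hab, smul_zero])

variable [NeZero n]

theorem adj_iff {x y : ZMod n} :
    (strongPowerGraphZ n).Adj x y ↔
      x ≠ y ∧ ¬ (x = 0 ∧ IsUnit y) ∧ ¬ (y = 0 ∧ IsUnit x) := by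
  refine ⟨fun h => ⟨h.ne, ?_, ?_⟩, fun ⟨hxy, hx, hy⟩ => ⟨hxy, ?_⟩⟩
  · rintro ⟨rfl, hy⟩
    exact not_adj_zero_of_isUnit hy h
  · rintro ⟨rfl, hx⟩
    exact not_adj_zero_of_isUnit hx h.symm
  have : Nontrivial (ZMod n) := ⟨⟨x, y, hxy⟩⟩
  have hn : 1 < n := lt_of_le_of_ne NeZero.one_le (ZMod.nontrivial_iff.mp this).symm
  by_cases hxu : IsUnit x
  · obtain ⟨a, ha, han, rfl⟩ := ZMod.exists_nsmul_eq_of_isUnit hxu fun h => hy ⟨h, hxu⟩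
    exact ⟨a, 1, ha, han, one_pos, hn, (one_nsmul _).symm⟩
  by_cases hyu : IsUnit y
  · obtain ⟨b, hb, hbn, rfl⟩ := ZMod.exists_nsmul_eq_of_isUnit hyu fun h => hx ⟨h, hyu⟩
    exact ⟨1, b, one_pos, hn, hb, hbn, one_nsmul _⟩
  obtain ⟨a, ha, han, hax⟩ := ZMod.exists_nsmul_eq_zero_of_not_isUnit hxu
  obtain ⟨b, hb, hbn, hby⟩ := ZMod.exists_nsmul_eq_zero_of_not_isUnit hyu
  exact ⟨a, b, ha, han, hb, hbn, hax.trans hby.symm⟩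

theorem dist_eq (hn : n ≠ 1) (hnp : ¬ n.Prime) (x y : ZMod n) :
    (strongPowerGraphZ n).dist x y =
      if x = y then 0 else if (x = 0 ∧ IsUnit y) ∨ (y = 0 ∧ IsUnit x) then 2 else 1 := by
  split_ifs with hxy h
  · rw [hxy, SimpleGraph.dist_self]
  · wlog hx : x = 0 ∧ IsUnit y generalizing x y
    · rw [SimpleGraph.dist_comm]
      exact this y x (Ne.symm hxy) h.symm (h.resolve_left hx)
    obtain ⟨rfl, hy⟩ := hx
    obtain ⟨c, hc0, hcu⟩ := ZMod.exists_ne_zero_not_isUnit hn hnp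
    have h0c : (strongPowerGraphZ n).Adj 0 c := adj_iff.mpr
      ⟨hc0.symm, fun h => hcu h.2, fun h => hc0 h.1⟩
    have hyc : (strongPowerGraphZ n).Adj y c := adj_iff.mpr
      ⟨fun h => hcu (h ▸ hy), fun h => hcu h.2, fun h => hc0 h.1⟩
    rw [SimpleGraph.dist, SimpleGraph.edist_eq_two_iff.mpr
      ⟨hxy, not_adj_zero_of_isUnit hy, c, h0c, hyc⟩]
    rfl
  · rw [SimpleGraph.dist_eq_one_iff_adj, adj_iff]
    exact ⟨hxy, fun h' => h (.inl h'), fun h' => h (.inr h')⟩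

end strongPowerGraphZ

def distFactorLeft (n : ℕ) [NeZero n] : Matrix (ZMod n) (Fin 3) ℝ :=
  Matrix.of fun z => ![1, if z = 0 then 1 else 0, if IsUnit z then 1 else 0]

def distFactorRight (n : ℕ) [NeZero n] : Matrix (Fin 3) (ZMod n) ℝ :=
  Matrix.of ![1, fun z => if IsUnit z then 1 else 0, fun z => if z = 0 then 1 else 0]

section DistMatrix

variable {n : ℕ} [NeZero n]

theorem distMatrixZ_eq_mul_sub_one (hn : n ≠ 1) (hnp : ¬ n.Prime) :
    distMatrixZ n = distFactorLeft n * distFactorRight n - 1 := by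
  have : Nontrivial (ZMod n) := ZMod.nontrivial_iff.mpr hn
  ext i j
  simp only [distMatrixZ, distFactorLeft, distFactorRight, Matrix.of_apply, Matrix.sub_apply,
    Matrix.mul_apply, Fin.sum_univ_three, Matrix.one_apply, strongPowerGraphZ.dist_eq hn hnp]
  by_cases hij : i = j
  · subst hij
    by_cases hi : i = 0 <;> simp [hi]
  by_cases hi : i = 0 <;> by_cases hj : j = 0 <;> by_cases hiu : IsUnit i <;>
    by_cases hju : IsUnit j <;> simp_all [one_add_one_eq_two]

theorem distFactorRight_mul_distFactorLeft (hn : n ≠ 1) :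
    distFactorRight n * distFactorLeft n =
      !![(n : ℝ), 1, n.totient; n.totient, 0, n.totient; 1, 1, 0] := by
  have : Nontrivial (ZMod n) := ZMod.nontrivial_iff.mpr hn
  ext k l
  fin_cases k <;> fin_cases l <;>
    simp +contextual [IsUnit.ne_zero, distFactorLeft, distFactorRight, Matrix.mul_apply,
      Finset.sum_boole, ZMod.card_filter_isUnit]

end DistMatrix

theorem Nat.totient_add_two_le_of_not_prime {n : ℕ} (hn : 2 ≤ n) (hnp : ¬ n.Prime) :
    n.totient + 2 ≤ n := by
  have hlt := Nat.totient_lt n hn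
  have hne : n.totient ≠ n - 1 := fun h => hnp ((Nat.totient_eq_iff_prime (by omega)).mp h)
  omega

-- `distCubic n (φ n) t` is the characteristic polynomial of `distFactorRight n * distFactorLeft n`
def distCubic (a b t : ℝ) : ℝ := t ^ 3 - a * t ^ 2 - 3 * b * t + a * b - b - b ^ 2

open Polynomial in
theorem eval_charpoly_distMatrixZ {n : ℕ} [NeZero n] (hn : 3 ≤ n) (hnp : ¬ n.Prime) (y : ℝ) :
    (distMatrixZ n).charpoly.eval y = (y + 1) ^ (n - 3) * distCubic n n.totient (y + 1) := by
  have hcard : Fintype.card (Fin 3) ≤ Fintype.card (ZMod n) := by simpa using hn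
  rw [distMatrixZ_eq_mul_sub_one (by omega) hnp, ← map_one (Matrix.scalar (ZMod n)),
    Matrix.charpoly_sub_scalar, Matrix.charpoly_mul_comm_of_le _ _ hcard,
    distFactorRight_mul_distFactorLeft (by omega), eval_comp, eval_mul, eval_pow,
    Matrix.eval_charpoly, Matrix.det_fin_three]
  simp only [map_one, eval_add, eval_X, eval_one, ZMod.card, Fintype.card_fin, Matrix.scalar_apply,
    Matrix.sub_apply, Matrix.diagonal_apply_eq, Matrix.diagonal_apply_ne, Matrix.of_apply,
    Matrix.cons_val', Matrix.cons_val_zero, Matrix.cons_val_fin_one, Matrix.cons_val_one,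
    Matrix.cons_val, ne_eq, Fin.reduceEq, not_false_eq_true, distCubic]
  ring

open Polynomial in
theorem charpoly_distMatrixZ_eq_prod {n : ℕ} [NeZero n] (hn : 3 ≤ n) (hnp : ¬ n.Prime)
    {r₁ r₂ r₃ : ℝ} (h : ∀ y, (y - r₁) * (y - r₂) * (y - r₃) = distCubic n n.totient (y + 1)) :
    (distMatrixZ n).charpoly =
      ((Multiset.replicate (n - 3) (-1) + {r₁, r₂, r₃}).map fun r => X - C r).prod := by
  refine Polynomial.funext fun y => ?_
  rw [eval_charpoly_distMatrixZ hn hnp, eval_multiset_prod, ← h]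
  simp only [Multiset.insert_eq_cons, Multiset.add_cons, Multiset.map_cons, Multiset.map_add,
    Multiset.map_replicate, Multiset.map_singleton, Multiset.prod_cons, Multiset.prod_add,
    Multiset.prod_replicate, Multiset.prod_singleton, map_neg, map_one, sub_neg_eq_add,
    eval_sub, eval_X, eval_C, eval_add, eval_one]
  ring

namespace Real

theorem cubic_eq_prod_sub_two_mul_cos (θ s y : ℝ) :
    y ^ 3 - 3 * s ^ 2 * y - 2 * s ^ 3 * cos θ =
      (y - 2 * s * cos (θ / 3)) * (y - 2 * s * cos ((θ + 2 * π) / 3)) *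
        (y - 2 * s * cos ((θ - 2 * π) / 3)) := by
  set c := cos (θ / 3)
  set d := sin (θ / 3)
  have hadd : cos ((θ + 2 * π) / 3) = -c / 2 - √3 / 2 * d := by
    rw [show (θ + 2 * π) / 3 = θ / 3 + (π - π / 3) by ring, cos_add, cos_pi_sub, sin_pi_sub,
      cos_pi_div_three, sin_pi_div_three]
    ring
  have hsub : cos ((θ - 2 * π) / 3) = -c / 2 + √3 / 2 * d := by
    rw [show (θ - 2 * π) / 3 = θ / 3 - (π - π / 3) by ring, cos_sub, cos_pi_sub, sin_pi_sub,
      cos_pi_div_three, sin_pi_div_three]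
    ring
  have htriple : cos θ = 4 * c ^ 3 - 3 * c := by
    rw [← cos_three_mul, mul_div_cancel₀ θ three_ne_zero]
  rw [hadd, hsub, htriple]
  linear_combination (y - 2 * s * c) * s ^ 2 * d ^ 2 * sq_sqrt (zero_le_three (α := ℝ)) +
    3 * (y - 2 * s * c) * s ^ 2 * sin_sq_add_cos_sq (θ / 3)

theorem cos_div_three_lt_of_pos_of_lt_pi {θ : ℝ} (h₀ : 0 < θ) (hπ : θ < π) :
    cos ((θ + 2 * π) / 3) < cos ((θ - 2 * π) / 3) ∧ cos ((θ - 2 * π) / 3) < cos (θ / 3) := by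
  rw [show (θ - 2 * π) / 3 = -((2 * π - θ) / 3) by ring, cos_neg]
  constructor <;> apply cos_lt_cos_of_nonneg_of_le_pi <;> linarith [pi_pos]

end Real

lemma div_two_mul_sqrt_pow_three_mem_Ioo {a b : ℝ} (hb : 0 < b) (hab : b + 1 ≤ a) :
    (2 * a ^ 3 + 27 * b ^ 2 + 27 * b) / (2 * √((a ^ 2 + 9 * b) ^ 3)) ∈ Set.Ioo 0 1 := by
  have ha : 0 < a := by linarith
  have hden : 0 < 2 * √((a ^ 2 + 9 * b) ^ 3) := by positivity
  refine ⟨by positivity, (div_lt_one hden).mpr ?_⟩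
  rw [← div_lt_iff₀' two_pos, Real.lt_sqrt (by positivity)]
  -- `4 (a² + 9b)³ - (2a³ + 27b² + 27b)²`
  --   `= 108 a³ b (a - b - 1) + 243 a² b² + 729 b² (a² - (b - 1)²)`
  have h1 : 0 ≤ a - b - 1 := by linarith
  have h2 : 0 ≤ a ^ 2 - (b - 1) ^ 2 := by nlinarith
  linarith [mul_nonneg (mul_nonneg (pow_nonneg ha.le 3) hb.le) h1,
    mul_nonneg (sq_nonneg b) h2, mul_pos (pow_pos ha 2) (pow_pos hb 2)]

open Real in
theorem prod_sub_eq_distCubic {a b θ r₁ r₂ r₃ : ℝ} (hb : 0 < b) (hab : b + 1 ≤ a)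
    (hθ : θ = arccos ((2 * a ^ 3 + 27 * b ^ 2 + 27 * b) / (2 * √((a ^ 2 + 9 * b) ^ 3))))
    (hr₁ : r₁ = (a - 3 + 2 * cos (θ / 3) * √(a ^ 2 + 9 * b)) / 3)
    (hr₂ : r₂ = (a - 3 + 2 * cos ((θ + 2 * π) / 3) * √(a ^ 2 + 9 * b)) / 3)
    (hr₃ : r₃ = (a - 3 + 2 * cos ((θ - 2 * π) / 3) * √(a ^ 2 + 9 * b)) / 3) (y : ℝ) :
    (y - r₁) * (y - r₂) * (y - r₃) = distCubic a b (y + 1) := by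
  set K := a ^ 2 + 9 * b
  have hK : 0 < K := by nlinarith
  have hsK : √K ^ 2 = K := sq_sqrt hK.le
  have hcos : 2 * √K ^ 3 * cos θ = 2 * a ^ 3 + 27 * b ^ 2 + 27 * b := by
    obtain ⟨harg₀, harg₁⟩ := div_two_mul_sqrt_pow_three_mem_Ioo hb hab
    have hK3 : √(K ^ 3) = √K ^ 3 := by
      rw [show K ^ 3 = (√K ^ 3) ^ 2 by rw [← pow_mul, mul_comm, pow_mul, hsK],
        sqrt_sq (pow_nonneg (sqrt_nonneg K) 3)]
    rw [hθ, cos_arccos (by linarith) harg₁.le, hK3]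
    field_simp
  -- with `t = 3 (y + 1) - a`, `27 · distCubic a b (y + 1) = t³ - 3 K t - (2a³ + 27b² + 27b)`
  have hviete := cubic_eq_prod_sub_two_mul_cos θ √K (3 * y - (a - 3))
  rw [hr₁, hr₂, hr₃, distCubic]
  linear_combination (-1 / 27 : ℝ) * hviete - (3 * y - (a - 3)) / 9 * hsK - (1 / 27 : ℝ) * hcos

/-- For a composite number `n`, with `θ = arccos((2n³+27φ(n)²+27φ(n))/(2√((n²+9φ(n))³)))`,
we have `0 < θ < π/2`, and the roots of the distance characteristic polynomial of the
strong power graph of `ZMod n` are `-1` with multiplicity `n-3` together with the three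
pairwise distinct simple roots `(n-3+2cos((θ+2kπ)/3)√(n²+9φ(n)))/3`, `k = 0, 1, -1`. -/
theorem distMatrixZ_roots (n : ℕ) [NeZero n] (hn : 2 ≤ n) (hnp : ¬ n.Prime)
    (θ r₁ r₂ r₃ : ℝ)
    (hθ : θ = Real.arccos ((2 * (n : ℝ) ^ 3 + 27 * (n.totient : ℝ) ^ 2 + 27 * (n.totient : ℝ)) /
      (2 * Real.sqrt (((n : ℝ) ^ 2 + 9 * (n.totient : ℝ)) ^ 3))))
    (hr₁ : r₁ = ((n : ℝ) - 3 + 2 * Real.cos (θ / 3) *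
      Real.sqrt ((n : ℝ) ^ 2 + 9 * (n.totient : ℝ))) / 3)
    (hr₂ : r₂ = ((n : ℝ) - 3 + 2 * Real.cos ((θ + 2 * Real.pi) / 3) *
      Real.sqrt ((n : ℝ) ^ 2 + 9 * (n.totient : ℝ))) / 3)
    (hr₃ : r₃ = ((n : ℝ) - 3 + 2 * Real.cos ((θ - 2 * Real.pi) / 3) *
      Real.sqrt ((n : ℝ) ^ 2 + 9 * (n.totient : ℝ))) / 3) :
    (0 < θ ∧ θ < Real.pi / 2) ∧
    (r₁ ≠ r₂ ∧ r₁ ≠ r₃ ∧ r₂ ≠ r₃) ∧ (r₁ ≠ -1 ∧ r₂ ≠ -1 ∧ r₃ ≠ -1) ∧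
    (distMatrixZ n).charpoly.roots = Multiset.replicate (n - 3) (-1) + {r₁, r₂, r₃} := by
  have hφ := Nat.totient_add_two_le_of_not_prime hn hnp
  have hφ₀ : 0 < n.totient := Nat.totient_pos.mpr (by omega)
  have hb : (0 : ℝ) < n.totient := by exact_mod_cast hφ₀
  have hab : (n.totient : ℝ) + 1 ≤ n := by exact_mod_cast (by omega : n.totient + 1 ≤ n)
  obtain ⟨harg₀, harg₁⟩ := div_two_mul_sqrt_pow_three_mem_Ioo hb hab
  have hθ₀ : 0 < θ := hθ ▸ Real.arccos_pos.mpr harg₁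
  have hθπ : θ < Real.pi / 2 := hθ ▸ Real.arccos_lt_pi_div_two.mpr harg₀
  have hcubic := prod_sub_eq_distCubic hb hab hθ hr₁ hr₂ hr₃
  obtain ⟨hcos₂₃, hcos₃₁⟩ := Real.cos_div_three_lt_of_pos_of_lt_pi hθ₀ (by linarith [Real.pi_pos])
  have h₂₃ : r₂ < r₃ := by rw [hr₂, hr₃]; gcongr
  have h₃₁ : r₃ < r₁ := by rw [hr₃, hr₁]; gcongr
  have hval : (-1 - r₁) * (-1 - r₂) * (-1 - r₃) ≠ 0 := by
    have hab₂ : (n.totient : ℝ) + 2 ≤ n := by exact_mod_cast hφ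
    -- `distCubic n φ 0 = φ (n - φ - 1)`
    rw [hcubic, distCubic]; nlinarith
  refine ⟨⟨hθ₀, hθπ⟩, ⟨(h₂₃.trans h₃₁).ne', h₃₁.ne', h₂₃.ne⟩,
    ⟨fun h => hval (by rw [h]; ring), fun h => hval (by rw [h]; ring),
      fun h => hval (by rw [h]; ring)⟩, ?_⟩
  rw [charpoly_distMatrixZ_eq_prod (by omega) hnp hcubic, Polynomial.roots_multiset_prod_X_sub_C]
end

section
/- Let p ≥ 2 be a prime number and let Z_p be the cyclic group of order p. The adjacency spectrum of the strong power graph P_s(Z_p) consists of the eigenvalue 0 with multiplicity 1, the eigenvalue -1 with multiplicity p-2, and the eigenvalue p-2 with multiplicity 1. -/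
/-!
For prime `p` every nonzero element of `ZMod p` generates the group, so two elements are adjacent
in the strong power graph exactly when they are distinct and nonzero: `0` is an isolated vertex
and the remaining `p - 1` vertices form a complete graph. The isolated vertex contributes a factor
`X`, and the adjacency matrix `J - I` of `K_{p-1}` has characteristic polynomial
`(X + 1)^(p-2) (X - (p - 2))` because the all-ones matrix `J` has rank one.
-/

open Matrix Polynomial

namespace SimpleGraph

variable {V R : Type*} [Fintype V] [DecidableEq V] [CommRing R]

theorem charpoly_adjMatrix_completeGraph [Nonempty V] :
    ((completeGraph V).adjMatrix R).charpoly =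
      (X + 1) ^ (Fintype.card V - 1) * (X - C ((Fintype.card V : R) - 1)) := by
  have hJ : (completeGraph V).adjMatrix R = vecMulVec 1 1 - scalar V 1 := by
    rw [adjMatrix_completeGraph_eq_of_one_sub_one]
    ext i j
    simp
  obtain ⟨n, hn⟩ : ∃ n, Fintype.card V = n + 1 := Nat.exists_eq_add_one.mpr Fintype.card_pos
  have hdot : (1 : V → R) ⬝ᵥ 1 = n + 1 := by simp [dotProduct, hn]
  rw [hJ, charpoly_sub_scalar, charpoly_vecMulVec, hdot, hn, add_tsub_cancel_right, smul_eq_C_mul,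
    sub_comp, mul_comp, C_comp, pow_comp, pow_comp, X_comp]
  simp only [map_sub, map_add, map_natCast, map_one, Nat.cast_add, Nat.cast_one]
  ring

theorem charpoly_adjMatrix_of_isolated (G : SimpleGraph V) [DecidableRel G.Adj] (s : Set V)
    [DecidablePred (· ∈ s)] (hs : ∀ x y, G.Adj x y → x ∈ s) :
    (G.adjMatrix R).charpoly = X ^ Fintype.card ↥sᶜ * ((G.induce s).adjMatrix R).charpoly := by
  have hblocks : reindex (Equiv.Set.sumCompl s).symm (Equiv.Set.sumCompl s).symm (G.adjMatrix R)
      = fromBlocks ((G.induce s).adjMatrix R) 0 0 0 := by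
    ext (i | i) (j | j)
    · simp
    · have : ¬G.Adj i j := fun h => j.2 (hs _ _ h.symm)
      simp [this]
    all_goals
      have : ¬G.Adj i j := fun h => i.2 (hs _ _ h)
      simp [this]
  rw [← charpoly_reindex (Equiv.Set.sumCompl s).symm, hblocks, charpoly_fromBlocks_zero₁₂,
    charpoly_zero, mul_comm]

end SimpleGraph

open Classical in
theorem adjMatrixZ_eq_adjMatrix (n : ℕ) [NeZero n] :
    adjMatrixZ n = (strongPowerGraphZ n).adjMatrix ℝ :=
  rfl

theorem strongPowerGraphZ_adj_iff {p : ℕ} [Fact p.Prime] {x y : ZMod p} :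
    (strongPowerGraphZ p).Adj x y ↔ x ≠ y ∧ x ≠ 0 ∧ y ≠ 0 := by
  have hcast_ne_zero : ∀ a : ℕ, 0 < a → a < p → (a : ZMod p) ≠ 0 := fun a ha hap => by
    rw [Ne, ZMod.natCast_eq_zero_iff]
    exact Nat.not_dvd_of_pos_of_lt ha hap
  constructor
  · rintro ⟨hxy, a, b, ha, hap, hb, hbp, hab⟩
    rw [nsmul_eq_mul, nsmul_eq_mul] at hab
    have hx_iff_hy : x = 0 ↔ y = 0 := by
      rw [← mul_eq_zero_iff_left (hcast_ne_zero a ha hap), hab,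
        mul_eq_zero_iff_left (hcast_ne_zero b hb hbp)]
    exact ⟨hxy, fun hx => hxy (hx.trans (hx_iff_hy.mp hx).symm),
      fun hy => hxy ((hx_iff_hy.mpr hy).trans hy.symm)⟩
  · rintro ⟨hxy, hx, hy⟩
    refine ⟨hxy, (y / x).val, 1, ZMod.val_pos.mpr (div_ne_zero hy hx), ZMod.val_lt _, one_pos,
      (Fact.out : p.Prime).one_lt, ?_⟩
    rw [nsmul_eq_mul, ZMod.natCast_zmod_val, div_mul_cancel₀ y hx, one_smul]

theorem adjMatrixZ_charpoly_prime {p : ℕ} [Fact p.Prime] :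
    (adjMatrixZ p).charpoly = X * (X - C ((p : ℝ) - 2)) * (X + 1) ^ (p - 2) := by
  classical
  have hs : ∀ x y, (strongPowerGraphZ p).Adj x y → x ∈ ({0}ᶜ : Set (ZMod p)) :=
    fun _ _ h => (strongPowerGraphZ_adj_iff.mp h).2.1
  have hK : ((strongPowerGraphZ p).induce ({0}ᶜ : Set (ZMod p))).adjMatrix ℝ
      = (SimpleGraph.completeGraph _).adjMatrix ℝ := by
    ext ⟨i, hi : i ≠ 0⟩ ⟨j, hj : j ≠ 0⟩
    simp [strongPowerGraphZ_adj_iff, hi, hj, ite_not, Subtype.ext_iff]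
  have hcompl : Fintype.card ↥({0}ᶜ : Set (ZMod p)) = p - 1 := by
    rw [Fintype.card_compl_set, ZMod.card, Set.card_singleton]
  have hzero : Fintype.card ↥({0}ᶜᶜ : Set (ZMod p)) = 1 := by
    simp
  have hp2 : 2 ≤ p := (Fact.out : p.Prime).two_le
  rw [adjMatrixZ_eq_adjMatrix, SimpleGraph.charpoly_adjMatrix_of_isolated _ _ hs, hK,
    SimpleGraph.charpoly_adjMatrix_completeGraph, hcompl, hzero, Nat.cast_sub (by omega),
    show p - 1 - 1 = p - 2 by omega, Nat.cast_one, show (p : ℝ) - 1 - 1 = p - 2 by ring]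
  ring

/-- For a prime `p`, the adjacency spectrum of the strong power graph of `ZMod p` consists
of the eigenvalue `0` with multiplicity `1`, the eigenvalue `-1` with multiplicity `p-2`,
and the eigenvalue `p-2` with multiplicity `1`. -/
theorem adjMatrixZ_roots_prime (p : ℕ) [NeZero p] (hp : p.Prime) :
    (adjMatrixZ p).charpoly.roots =
      {(0 : ℝ), (p : ℝ) - 2} + Multiset.replicate (p - 2) (-1) := by
  have := Fact.mk hp
  rw [adjMatrixZ_charpoly_prime, ← roots_multiset_prod_X_sub_C ({(0 : ℝ), (p : ℝ) - 2} + _)]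
  simp [mul_assoc]
end
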